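/- Let V : ℝ → ℝ be any function, let n : ℝ → ℝ be differentiable, and let B > 0 and F ≥ 0 be real constants. Define δ(t, x) = n(t)·exp(−x/B) for all t and all x ≥ 0. Then δ satisfies the bathtub transport equation ∂_t δ(t, x) − V(n(t))·∂_x δ(t, x) = F·exp(−x/B) for all t and all x ≥ 0 if and only if n satisfies the ordinary differential equation n'(t) = F − n(t)·V(n(t))/B for all t. -/

import Mathlib

open Real

theorem deriv_const_mul_exp_neg_div (c B x : ℝ) :
    deriv (fun y : ℝ => c * exp (-y / B)) x = -(c / B) * exp (-x / B) := by
  have h : HasDerivAt (fun y : ℝ => c * exp (-y / B)) (c * (exp (-x / B) * (-1 / B))) x :=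
    (((hasDerivAt_id x).neg.div_const B).exp).const_mul c
  rw [h.deriv]
  ring

theorem bathtub_residual_exponential_profile (V n : ℝ → ℝ) (B t x : ℝ) :
    deriv (fun τ : ℝ => n τ * exp (-x / B)) t
        - V (n t) * deriv (fun y : ℝ => n t * exp (-y / B)) x
      = (deriv n t + n t * V (n t) / B) * exp (-x / B) := by
  rw [deriv_mul_const_field', deriv_const_mul_exp_neg_div]
  ring

theorem exponential_profile_reduces_bathtub_pde_to_ode_general
    (V : ℝ → ℝ) (n : ℝ → ℝ)
    (B F : ℝ) :
    (∀ t : ℝ, ∀ x : ℝ, 0 ≤ x →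
        deriv (fun τ : ℝ => n τ * Real.exp (-x / B)) t
          - V (n t) * deriv (fun y : ℝ => n t * Real.exp (-y / B)) x
        = F * Real.exp (-x / B)) ↔
    (∀ t : ℝ, deriv n t = F - n t * V (n t) / B) := by
  simp only [bathtub_residual_exponential_profile]
  constructor
  · intro hpde t
    have hode := mul_right_cancel₀ (exp_ne_zero _) (hpde t 0 le_rfl)
    linarith
  · intro hode t x _
    rw [hode t]
    ring

/-- For the exponential trip-length profile `δ(t, x) = n(t)·exp(−x/B)`, the
bathtub transport equation `∂_t δ − V(n(t))·∂_x δ = F·exp(−x/B)` holds for all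
`t` and all `x ≥ 0` if and only if `n` solves the bathtub ODE
`n'(t) = F − n(t)·V(n(t))/B`. -/
theorem exponential_profile_reduces_bathtub_pde_to_ode
    (V : ℝ → ℝ) (n : ℝ → ℝ) (hn : Differentiable ℝ n)
    (B F : ℝ) (hB : 0 < B) (hF : 0 ≤ F) :
    (∀ t : ℝ, ∀ x : ℝ, 0 ≤ x →
        deriv (fun τ : ℝ => n τ * Real.exp (-x / B)) t
          - V (n t) * deriv (fun y : ℝ => n t * Real.exp (-y / B)) x
        = F * Real.exp (-x / B)) ↔
    (∀ t : ℝ, deriv n t = F - n t * V (n t) / B) :=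
  exponential_profile_reduces_bathtub_pde_to_ode_general V n B F
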